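/- arXiv:2505.20238 — 3 statements merged into one kernel-verified Lean document; each statement's English description precedes it below -/
import Mathlib

section
/- Let K ⊆ P ⊆ L be finite extensions inside K̄, let L̃ be the Galois closure of L/K, G = Gal(L̃/K), H = Gal(L̃/L) and G₀ = Gal(L̃/P). Then (1) r_K(L) = r_P(L) · [N_G(H) : N_{G₀}(H)]; in particular r_P(L) divides r_K(L); and (2) if N denotes the fixed field of N_G(H) in L̃ and N₁ denotes the fixed field of N_{G₀}(H) in L̃, then N·P = N₁. -/
open IntermediateField Polynomial
open scoped Classical

/-- The Galois closure of `L/K` inside the ambient field `Kbar`. -/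
noncomputable def galClosure (K : Type*) {Kbar : Type*} [Field K] [Field Kbar] [Algebra K Kbar]
    (L : IntermediateField K Kbar) : IntermediateField K Kbar :=
  normalClosure K L Kbar

/-- `H = Gal(L̃/L)` as a subgroup of `G = Gal(L̃/K)`. -/
noncomputable def fixSub (K : Type*) {Kbar : Type*} [Field K] [Field Kbar] [Algebra K Kbar]
    (L : IntermediateField K Kbar) :
    Subgroup (↥(galClosure K L) ≃ₐ[K] ↥(galClosure K L)) :=
  (IntermediateField.comap (galClosure K L).val L).fixingSubgroup

/-- The normal closure `H^G` of `H = Gal(L̃/L)` in `G = Gal(L̃/K)`. -/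
noncomputable def fixSubCl (K : Type*) {Kbar : Type*} [Field K] [Field Kbar] [Algebra K Kbar]
    (L : IntermediateField K Kbar) :
    Subgroup (↥(galClosure K L) ≃ₐ[K] ↥(galClosure K L)) :=
  Subgroup.normalClosure
    ((fixSub K L : Subgroup (↥(galClosure K L) ≃ₐ[K] ↥(galClosure K L))) :
      Set (↥(galClosure K L) ≃ₐ[K] ↥(galClosure K L)))

/-- Cluster size `r_K(L) = [N_G(H) : H]`. -/
noncomputable def clusterSize (K : Type*) {Kbar : Type*} [Field K] [Field Kbar] [Algebra K Kbar]
    (L : IntermediateField K Kbar) : ℕ :=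
  (fixSub K L).relIndex (Subgroup.normalizer (fixSub K L : Set _))

/-- Number of clusters `s_K(L) = [G : N_G(H)]`. -/
noncomputable def numClusters (K : Type*) {Kbar : Type*} [Field K] [Field Kbar] [Algebra K Kbar]
    (L : IntermediateField K Kbar) : ℕ :=
  (Subgroup.normalizer (fixSub K L : Set (↥(galClosure K L) ≃ₐ[K] ↥(galClosure K L)))).index

/-- Ascending index `t_K(L) = [G : H^G]`. -/
noncomputable def ascIndex (K : Type*) {Kbar : Type*} [Field K] [Field Kbar] [Algebra K Kbar]
    (L : IntermediateField K Kbar) : ℕ :=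
  (fixSubCl K L).index

/-- Root capacity `ρ_K(M, L)`: the number of roots lying in `M` of the minimal polynomial
over `K` of a primitive element of `L`. -/
noncomputable def rootCapacity (K : Type*) {Kbar : Type*} [Field K] [Field Kbar] [Algebra K Kbar]
    (M L : IntermediateField K Kbar) : ℕ :=
  ((minpoly K (Classical.epsilon (fun α : Kbar => K⟮α⟯ = L))).rootSet Kbar ∩ (M : Set Kbar)).ncard

/-- Intersection indicium `τ_K(M, L)`: the degree over `K` of the intersection of all
subfields of `M` that are `K`-isomorphic to `L`, or `0` if there are none. -/
noncomputable def interIndicium (K : Type*) {Kbar : Type*} [Field K] [Field Kbar] [Algebra K Kbar]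
    (M L : IntermediateField K Kbar) : ℕ :=
  if {L' : IntermediateField K Kbar | L' ≤ M ∧ Nonempty (↥L' ≃ₐ[K] ↥L)}.Nonempty then
    Module.finrank K ↥(sInf {L' : IntermediateField K Kbar | L' ≤ M ∧ Nonempty (↥L' ≃ₐ[K] ↥L)})
  else 0

/-- `B` is a minimal generating set of the Galois closure of `L/K`: a set of subfields of
`K̄` that are `K`-isomorphic to `L`, whose compositum is `L̃`, and such that no proper subset
has compositum `L̃`. -/
def IsMinGenSet (K : Type*) {Kbar : Type*} [Field K] [Field Kbar] [Algebra K Kbar]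
    (L : IntermediateField K Kbar) (B : Set (IntermediateField K Kbar)) : Prop :=
  (∀ L' ∈ B, Nonempty (↥L' ≃ₐ[K] ↥L)) ∧ sSup B = galClosure K L ∧
    ∀ A : Set (IntermediateField K Kbar), A ⊂ B → sSup A ≠ galClosure K L

section GeneralLemmas

variable {F E : Type*} [Field F] [Field E] [Algebra F E]

lemma smul_mem_of_mem_normalizer' [FiniteDimensional F E] [IsGalois F E]
    {W : IntermediateField F E} {σ : E ≃ₐ[F] E}
    (hσ : σ ∈ (Subgroup.normalizer (W.fixingSubgroup : Set (E ≃ₐ[F] E)))) {x : E} (hx : x ∈ W) : σ x ∈ W := by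
  have hW := IsGalois.fixedField_fixingSubgroup W
  rw [← hW] at hx ⊢
  intro τ
  have hτ : (σ⁻¹ * (τ : E ≃ₐ[F] E) * σ) ∈ W.fixingSubgroup := by
    have := (Subgroup.mem_normalizer_iff.mp (inv_mem hσ) (τ : E ≃ₐ[F] E)).mp τ.2
    simpa using this
  have h2 : (σ⁻¹ * (τ : E ≃ₐ[F] E) * σ) x = x := hx ⟨_, hτ⟩
  simp only [AlgEquiv.mul_apply] at h2
  show (τ : E ≃ₐ[F] E) (σ x) = σ x
  calc (τ : E ≃ₐ[F] E) (σ x) = σ (σ⁻¹ ((τ : E ≃ₐ[F] E) (σ x))) := by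
        simp [← AlgEquiv.mul_apply]
    _ = σ x := by rw [h2]

/-- The restriction of an element of the normalizer of `Gal(E/W)` to an automorphism of `W`. -/
noncomputable def resAut [FiniteDimensional F E] [IsGalois F E] (W : IntermediateField F E)
    (σ : ↥(Subgroup.normalizer (W.fixingSubgroup : Set (E ≃ₐ[F] E)))) : ↥W ≃ₐ[F] ↥W :=
  AlgEquiv.ofBijective
    { toFun := fun x => ⟨(σ : E ≃ₐ[F] E) x, smul_mem_of_mem_normalizer' σ.2 x.2⟩
      map_one' := Subtype.ext (map_one _)
      map_mul' := fun x y => Subtype.ext (map_mul _ _ _)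
      map_zero' := Subtype.ext (map_zero _)
      map_add' := fun x y => Subtype.ext (map_add _ _ _)
      commutes' := fun c => Subtype.ext (by
        show (σ : E ≃ₐ[F] E) (algebraMap F E c) = algebraMap F E c
        exact (σ : E ≃ₐ[F] E).commutes c) }
    (AlgHom.bijective _)

lemma resAut_coe [FiniteDimensional F E] [IsGalois F E] (W : IntermediateField F E)
    (σ : ↥(Subgroup.normalizer (W.fixingSubgroup : Set (E ≃ₐ[F] E)))) (x : ↥W) :
    (resAut W σ x : E) = (σ : E ≃ₐ[F] E) (x : E) := rfl

/-- Restriction to `W` as a group hom on the normalizer of `Gal(E/W)`. -/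
noncomputable def resHom [FiniteDimensional F E] [IsGalois F E] (W : IntermediateField F E) :
    ↥(Subgroup.normalizer (W.fixingSubgroup : Set (E ≃ₐ[F] E))) →* (↥W ≃ₐ[F] ↥W) where
  toFun := resAut W
  map_one' := by ext x; simp [resAut_coe]
  map_mul' := fun σ τ => by ext x; simp [resAut_coe]

lemma resHom_surjective [FiniteDimensional F E] [IsGalois F E] (W : IntermediateField F E) :
    Function.Surjective (resHom W) := by
  intro g
  letI : Algebra ↥W E := W.toAlgebra
  let σ : E ≃ₐ[F] E := g.liftNormal E
  have key : ∀ x : ↥W, σ (x : E) = (g x : E) := fun x => by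
    have := AlgEquiv.liftNormal_commutes g E x
    simpa using this
  have hmemW : ∀ x ∈ W, σ x ∈ W := fun x hx => by
    rw [show x = ((⟨x, hx⟩ : ↥W) : E) from rfl, key]; exact (g ⟨x, hx⟩).2
  have hsurj : ∀ y ∈ W, ∃ x ∈ W, σ x = y := fun y hy => by
    refine ⟨(g.symm ⟨y, hy⟩ : E), (g.symm ⟨y, hy⟩).2, ?_⟩
    rw [key]; simp
  have hσ : σ ∈ (Subgroup.normalizer (W.fixingSubgroup : Set (E ≃ₐ[F] E))) := by
    rw [Subgroup.mem_normalizer_iff]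
    intro τ
    constructor
    · intro hτ
      intro x
      obtain ⟨w, hw, hws⟩ := hsurj (x : E) x.2
      show σ (τ (σ⁻¹ (x : E))) = x
      have : σ⁻¹ (x : E) = w := by
        rw [← hws]; simp [← AlgEquiv.mul_apply]
      rw [IntermediateField.mem_fixingSubgroup_iff] at hτ
      rw [this, hτ w hw, hws]
    · intro hτ
      intro x
      have hσx : σ (x : E) ∈ W := hmemW _ x.2
      rw [IntermediateField.mem_fixingSubgroup_iff] at hτ
      show τ (x : E) = x
      have h2 : σ (τ (σ⁻¹ (σ (x : E)))) = σ (x : E) := hτ _ hσx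
      simp only [show σ⁻¹ (σ (x : E)) = (x : E) by simp [← AlgEquiv.mul_apply]] at h2
      exact σ.injective h2
  refine ⟨⟨σ, hσ⟩, ?_⟩
  ext x
  show ((resAut W ⟨σ, hσ⟩ x : E)) = (g x : E)
  rw [resAut_coe]
  exact key x

lemma resHom_ker [FiniteDimensional F E] [IsGalois F E] (W : IntermediateField F E) :
    (resHom W).ker = W.fixingSubgroup.subgroupOf (Subgroup.normalizer (W.fixingSubgroup : Set (E ≃ₐ[F] E))) := by
  ext σ
  simp only [MonoidHom.mem_ker, Subgroup.mem_subgroupOf]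
  rw [IntermediateField.mem_fixingSubgroup_iff]
  constructor
  · intro h
    intro x hx
    have := congrArg Subtype.val (AlgEquiv.ext_iff.mp h ⟨x, hx⟩)
    exact this
  · intro h
    ext x
    show ((resAut W σ x : E)) = (x : E)
    rw [resAut_coe]
    exact h (x : E) x.2

lemma master [FiniteDimensional F E] [IsGalois F E] (P' W : IntermediateField F E)
    (hPW : P' ≤ W) :
    W.fixingSubgroup.relIndex (P'.fixingSubgroup ⊓ (Subgroup.normalizer (W.fixingSubgroup : Set (E ≃ₐ[F] E)))) =
      Nat.card ((IntermediateField.comap W.val P').fixingSubgroup) := by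
  set N := (Subgroup.normalizer (W.fixingSubgroup : Set (E ≃ₐ[F] E))) with hN
  set D := P'.fixingSubgroup ⊓ N with hD
  have hDN : D ≤ N := inf_le_right
  let ψ : ↥D →* (↥W ≃ₐ[F] ↥W) := (resHom W).comp (Subgroup.inclusion hDN)
  have hker : ψ.ker = W.fixingSubgroup.subgroupOf D := by
    ext σ
    have : (Subgroup.inclusion hDN σ) ∈ (resHom W).ker ↔
        ((σ : E ≃ₐ[F] E) ∈ W.fixingSubgroup) := by
      rw [resHom_ker]; exact Iff.rfl
    simpa [ψ, MonoidHom.mem_ker, Subgroup.mem_subgroupOf] using this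
  have hrange : ψ.range = (IntermediateField.comap W.val P').fixingSubgroup := by
    apply le_antisymm
    · rintro g ⟨σ, rfl⟩
      rw [IntermediateField.mem_fixingSubgroup_iff]
      intro x hx
      have hxP : (x : E) ∈ P' := hx
      have hσP : (σ : E ≃ₐ[F] E) ∈ P'.fixingSubgroup := σ.2.1
      rw [IntermediateField.mem_fixingSubgroup_iff] at hσP
      apply Subtype.ext
      show ((resAut W (Subgroup.inclusion hDN σ) x : E)) = (x : E)
      rw [resAut_coe]
      exact hσP _ hxP
    · intro g hg
      rw [IntermediateField.mem_fixingSubgroup_iff] at hg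
      obtain ⟨σN, hσN⟩ := resHom_surjective W g
      have hσP : (σN : E ≃ₐ[F] E) ∈ P'.fixingSubgroup := by
        rw [IntermediateField.mem_fixingSubgroup_iff]
        intro x hx
        have hxW : x ∈ W := hPW hx
        have h1 : (resHom W σN) ⟨x, hxW⟩ = ⟨x, hxW⟩ := by
          rw [hσN]
          exact hg ⟨x, hxW⟩ hx
        have := congrArg Subtype.val h1
        rw [show ((resHom W σN ⟨x, hxW⟩ : ↥W) : E) = (σN : E ≃ₐ[F] E) x from rfl] at this
        exact this
      refine ⟨⟨(σN : E ≃ₐ[F] E), hσP, σN.2⟩, ?_⟩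
      have h2 : Subgroup.inclusion hDN (⟨(σN : E ≃ₐ[F] E), hσP, σN.2⟩ : ↥D) = σN :=
        Subtype.ext rfl
      show (resHom W) (Subgroup.inclusion hDN _) = g
      rw [h2, hσN]
  have : W.fixingSubgroup.relIndex D = Nat.card (↥D ⧸ ψ.ker) := by
    rw [hker]; rfl
  rw [this, Nat.card_congr (QuotientGroup.quotientKerEquivRange ψ).toEquiv, hrange]

lemma fixingSubgroup_bot' : (⊥ : IntermediateField F E).fixingSubgroup = ⊤ := by
  rw [eq_top_iff]
  intro σ _
  rw [IntermediateField.mem_fixingSubgroup_iff]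
  intro x hx
  obtain ⟨c, rfl⟩ := IntermediateField.mem_bot.mp hx
  exact σ.commutes c

lemma comap_val_bot (W : IntermediateField F E) :
    IntermediateField.comap W.val (⊥ : IntermediateField F E) = ⊥ := by
  apply le_antisymm
  · intro x hx
    obtain ⟨c, hc⟩ :=
      IntermediateField.mem_bot.mp (show W.val x ∈ (⊥ : IntermediateField F E) from hx)
    exact IntermediateField.mem_bot.mpr ⟨c, Subtype.ext (by simpa using hc)⟩
  · exact bot_le

lemma card_aut_eq [FiniteDimensional F E] [IsGalois F E] (W : IntermediateField F E) :
    W.fixingSubgroup.relIndex (Subgroup.normalizer (W.fixingSubgroup : Set (E ≃ₐ[F] E))) = Nat.card (↥W ≃ₐ[F] ↥W) := by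
  have := master (⊥ : IntermediateField F E) W bot_le
  rw [fixingSubgroup_bot', top_inf_eq, comap_val_bot, fixingSubgroup_bot'] at this
  rw [this]
  exact Nat.card_congr Subgroup.topEquiv.toEquiv

lemma fixingSubgroup_sup' (X Y : IntermediateField F E) :
    (X ⊔ Y).fixingSubgroup = X.fixingSubgroup ⊓ Y.fixingSubgroup := by
  have key : ∀ (Z : IntermediateField F E) (σ : E ≃ₐ[F] E),
      σ ∈ Z.fixingSubgroup ↔ Z ≤ IntermediateField.fixedField (Subgroup.zpowers σ) := by
    intro Z σ
    rw [IntermediateField.le_iff_le]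
    constructor
    · intro h
      exact (Subgroup.zpowers_le).mpr h
    · intro h
      exact h (Subgroup.mem_zpowers σ)
  ext σ
  rw [Subgroup.mem_inf, key, key, key, sup_le_iff]

end GeneralLemmas

section Transport

lemma card_fixing_congr {F A B : Type*} [Field F] [Field A] [Field B] [Algebra F A] [Algebra F B]
    (e : A ≃ₐ[F] B) (S : IntermediateField F A) (T : IntermediateField F B)
    (hST : ∀ x : A, x ∈ S ↔ e x ∈ T) :
    Nat.card S.fixingSubgroup = Nat.card T.fixingSubgroup := by
  let m : (A ≃ₐ[F] A) ≃* (B ≃ₐ[F] B) := AlgEquiv.autCongr e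
  have hcomap : Subgroup.comap m.toMonoidHom T.fixingSubgroup = S.fixingSubgroup := by
    ext σ
    simp only [Subgroup.mem_comap]
    rw [IntermediateField.mem_fixingSubgroup_iff, IntermediateField.mem_fixingSubgroup_iff]
    constructor
    · intro h x hx
      have this' : e (σ (e.symm (e x))) = e x := h (e x) ((hST x).mp hx)
      rw [e.symm_apply_apply] at this'
      exact e.injective this'
    · intro h y hy
      have hy' : e.symm y ∈ S := by
        rw [hST (e.symm y), e.apply_symm_apply]; exact hy
      show e (σ (e.symm y)) = y
      rw [h _ hy', e.apply_symm_apply]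
  rw [← hcomap]
  exact Nat.card_congr (Equiv.subtypeEquiv m.toEquiv fun σ => Subgroup.mem_comap)

variable {K Kbar : Type*} [Field K] [Field Kbar] [Algebra K Kbar]
    (P L : IntermediateField K Kbar) (hPL : P ≤ L)

/-- A `P`-automorphism of `L` is the same as a `K`-automorphism of `L` fixing `P` pointwise. -/
noncomputable def autEquivFixing :
    (↥(extendScalars hPL) ≃ₐ[↥P] ↥(extendScalars hPL)) ≃
      ↥((IntermediateField.comap L.val P).fixingSubgroup) where
  toFun g := ⟨AlgEquiv.ofRingEquiv (f := (g.toRingEquiv : ↥L ≃+* ↥L))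
      (fun c => by
        have h1 : algebraMap K ↥L c = algebraMap ↥P ↥(extendScalars hPL) (algebraMap K ↥P c) :=
          Subtype.ext rfl
        rw [h1]
        exact g.commutes _), by
      rw [IntermediateField.mem_fixingSubgroup_iff]
      intro x hx
      have hxP : (x : Kbar) ∈ P := hx
      have hxe : x = algebraMap ↥P ↥(extendScalars hPL) ⟨(x : Kbar), hxP⟩ := Subtype.ext rfl
      show g.toRingEquiv x = x
      conv_lhs => rw [hxe]
      rw [show (g.toRingEquiv (algebraMap ↥P ↥(extendScalars hPL) ⟨(x : Kbar), hxP⟩)) =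
        g (algebraMap ↥P ↥(extendScalars hPL) ⟨(x : Kbar), hxP⟩) from rfl, g.commutes]
      exact hxe.symm⟩
  invFun σ := AlgEquiv.ofRingEquiv
      (f := ((σ : ↥L ≃ₐ[K] ↥L).toRingEquiv : ↥(extendScalars hPL) ≃+* ↥(extendScalars hPL)))
      (fun p => by
        have hmem : algebraMap ↥P ↥(extendScalars hPL) p ∈ IntermediateField.comap L.val P := by
          show (algebraMap ↥P ↥(extendScalars hPL) p : Kbar) ∈ P
          exact p.2
        exact (IntermediateField.mem_fixingSubgroup_iff _ _).mp σ.2 _ hmem)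
  left_inv g := by ext x; rfl
  right_inv σ := by apply Subtype.ext; ext x; rfl

end Transport
set_option maxHeartbeats 2000000 in
set_option synthInstance.maxHeartbeats 200000 in
/-- For `K ⊆ P ⊆ L`, with `G = Gal(L̃/K)`, `H = Gal(L̃/L)`, `G₀ = Gal(L̃/P)`:
(1) `r_K(L) = r_P(L) · [N_G(H) : N_{G₀}(H)]`, in particular `r_P(L) ∣ r_K(L)`;
(2) if `N` is the fixed field of `N_G(H)` and `N₁` the fixed field of `N_{G₀}(H)`,
then `N·P = N₁`. -/
theorem statement0 {K Kbar : Type*} [Field K] [PerfectField K] [Field Kbar] [Algebra K Kbar]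
    [IsAlgClosure K Kbar] (P L : IntermediateField K Kbar) [FiniteDimensional K ↥L]
    (hPL : P ≤ L) :
    (clusterSize K L =
        clusterSize ↥P (IntermediateField.extendScalars hPL) *
          Subgroup.relIndex
            (IntermediateField.comap (galClosure K L).val P).fixingSubgroup
            (Subgroup.normalizer (fixSub K L : Set _)) ∧
      clusterSize ↥P (IntermediateField.extendScalars hPL) ∣ clusterSize K L) ∧
    IntermediateField.fixedField (Subgroup.normalizer (fixSub K L : Set _)) ⊔
        IntermediateField.comap (galClosure K L).val P =
      IntermediateField.fixedField
        ((Subgroup.normalizer (fixSub K L : Set _)) ⊓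
          (IntermediateField.comap (galClosure K L).val P).fixingSubgroup) := by
  have hLE : L ≤ galClosure K L := IntermediateField.le_normalClosure L
  haveI : FiniteDimensional K ↥(galClosure K L) :=
    normalClosure.is_finiteDimensional K ↥L Kbar
  haveI : IsGalois K ↥(galClosure K L) := IsGalois.normalClosure K ↥L Kbar
  set E := galClosure K L with hEdef
  set LE := IntermediateField.comap E.val L with hLEdef
  set PE := IntermediateField.comap E.val P with hPEdef
  have hPE_LE : PE ≤ LE := fun x hx => hPL hx
  have hHG0 : LE.fixingSubgroup ≤ PE.fixingSubgroup :=
    IntermediateField.fixingSubgroup_antitone hPE_LE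
  set H := LE.fixingSubgroup with hHdef
  set N := Subgroup.normalizer (H : Set (↥E ≃ₐ[K] ↥E)) with hNdef
  set G₀ := PE.fixingSubgroup with hG0def
  -- instances over P
  haveI : Algebra.IsAlgebraic ↥P Kbar := Algebra.IsAlgebraic.tower_top (K := K) ↥P
  haveI : IsGalois ↥P Kbar := ⟨⟩
  set L' := IntermediateField.extendScalars hPL with hL'def
  haveI : FiniteDimensional K ↥L' := by
    show FiniteDimensional K ↥(IntermediateField.restrictScalars K L')
    rw [hL'def, IntermediateField.extendScalars_restrictScalars]
    infer_instance
  haveI : FiniteDimensional ↥P ↥L' := FiniteDimensional.right K ↥P ↥L'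
  haveI : FiniteDimensional ↥P ↥(galClosure ↥P L') :=
    normalClosure.is_finiteDimensional ↥P ↥L' Kbar
  haveI : IsGalois ↥P ↥(galClosure ↥P L') := IsGalois.normalClosure ↥P ↥L' Kbar
  set E' := galClosure ↥P L' with hE'def
  have hL'E' : L' ≤ E' := IntermediateField.le_normalClosure L'
  -- the fixing subgroup H is exactly fixSub K L
  have hfix : fixSub K L = H := rfl
  -- Part 1
  have hHle : H ≤ G₀ ⊓ N := le_inf hHG0 Subgroup.le_normalizer
  have hmul : H.relIndex (G₀ ⊓ N) * (G₀ ⊓ N).relIndex N = H.relIndex N :=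
    Subgroup.relIndex_mul_relIndex H (G₀ ⊓ N) N hHle inf_le_right
  have hinf : (G₀ ⊓ N).relIndex N = G₀.relIndex N := Subgroup.inf_relIndex_right G₀ N
  -- identification of the first factor with clusterSize over P
  -- e2 : ↥LE ≃ₐ[K] ↥L
  have hmapLE : IntermediateField.map E.val LE = L :=
    IntermediateField.map_comap_eq_self (by rw [IntermediateField.fieldRange_val]; exact hLE)
  let e2 : ↥LE ≃ₐ[K] ↥L :=
    (IntermediateField.equivMap LE E.val).trans (IntermediateField.equivOfEq hmapLE)
  have he2coe : ∀ x : ↥LE, (e2 x : Kbar) = ((x : ↥E) : Kbar) := fun x => rfl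
  have hST2 : ∀ x : ↥LE, x ∈ IntermediateField.comap LE.val PE ↔
      e2 x ∈ IntermediateField.comap L.val P := by
    intro x
    show ((x : ↥E) : Kbar) ∈ P ↔ (e2 x : Kbar) ∈ P
    rw [he2coe]
  have hcount2 :
      Nat.card (IntermediateField.comap LE.val PE).fixingSubgroup =
        Nat.card (IntermediateField.comap L.val P).fixingSubgroup :=
    card_fixing_congr e2 _ _ hST2
  have hcount1 : H.relIndex (G₀ ⊓ N) =
      Nat.card (IntermediateField.comap LE.val PE).fixingSubgroup :=
    master PE LE hPE_LE
  -- cluster size over P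
  have hmapW' : IntermediateField.map E'.val (IntermediateField.comap E'.val L') = L' :=
    IntermediateField.map_comap_eq_self (by rw [IntermediateField.fieldRange_val]; exact hL'E')
  let e3 : ↥(IntermediateField.comap E'.val L') ≃ₐ[↥P] ↥L' :=
    (IntermediateField.equivMap _ E'.val).trans (IntermediateField.equivOfEq hmapW')
  have hcount3 : clusterSize ↥P L' =
      Nat.card (↥(IntermediateField.comap E'.val L') ≃ₐ[↥P] ↥(IntermediateField.comap E'.val L')) :=
    card_aut_eq (IntermediateField.comap E'.val L')
  have hcount4 :
      Nat.card (↥(IntermediateField.comap E'.val L') ≃ₐ[↥P] ↥(IntermediateField.comap E'.val L')) =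
        Nat.card (↥L' ≃ₐ[↥P] ↥L') :=
    Nat.card_congr (AlgEquiv.autCongr e3).toEquiv
  have hcount5 : Nat.card (↥L' ≃ₐ[↥P] ↥L') =
      Nat.card (IntermediateField.comap L.val P).fixingSubgroup :=
    Nat.card_congr (autEquivFixing P L hPL)
  have hclusterP : clusterSize ↥P L' = H.relIndex (G₀ ⊓ N) := by
    rw [hcount3, hcount4, hcount5, hcount1, hcount2]
  have heq1 : clusterSize K L = clusterSize ↥P L' * G₀.relIndex N := by
    show H.relIndex N = _
    rw [← hmul, hclusterP, hinf]
  refine ⟨⟨heq1, ⟨G₀.relIndex N, heq1⟩⟩, ?_⟩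
  -- Part 2
  show IntermediateField.fixedField N ⊔ PE = IntermediateField.fixedField (N ⊓ G₀)
  have hff := IsGalois.fixedField_fixingSubgroup (F := K) (E := ↥E)
    (IntermediateField.fixedField N ⊔ PE)
  conv_lhs => rw [← hff]
  congr 1
  rw [fixingSubgroup_sup', IntermediateField.fixingSubgroup_fixedField N]
end

section
/- Let K be a number field. Then there do not exist finite extensions L/K and M/K inside K̄ with [L : K] = 4, t_K(L) = 1 and τ_K(M, L) = 2. -/
open IntermediateField Polynomial
open scoped Classical

/-- A subgroup of index two is normal. -/
private theorem normal_of_index_two' {G : Type*} [Group G] {H : Subgroup G}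
    (h : H.index = 2) : H.Normal := by
  constructor
  intro n hn g
  rw [Subgroup.mul_mem_iff_of_index_two h, Subgroup.mul_mem_iff_of_index_two h,
    Subgroup.inv_mem_iff]
  simp [hn]

set_option synthInstance.maxHeartbeats 1000000
set_option maxHeartbeats 1000000

/-- Core argument: if `N/K` is a finite Galois subextension of `K̄/K` containing `L`,
`L'` is a `K`-isomorphic copy of `L`, `F ≤ L'` has degree `2` over `K`, and the normal
closure of `Gal(N/L)` in `Gal(N/K)` is everything, we get a contradiction. -/
private theorem aux_statement12 {K Kbar : Type*} [Field K] [Field Kbar] [Algebra K Kbar]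
    [CharZero K] [IsAlgClosure K Kbar]
    {L L' N F : IntermediateField K Kbar} [FiniteDimensional K ↥N] [Normal K ↥N]
    (e : ↥L' ≃ₐ[K] ↥L) (hLN : L ≤ N) (hFL' : F ≤ L') (hFN : F ≤ N)
    (hF2 : Module.finrank K ↥F = 2)
    (hT : Subgroup.normalClosure
      (((IntermediateField.comap N.val L).fixingSubgroup : Subgroup (↥N ≃ₐ[K] ↥N)) :
        Set (↥N ≃ₐ[K] ↥N)) = ⊤) :
    False := by
  haveI : CharZero Kbar := charZero_of_injective_algebraMap (algebraMap K Kbar).injective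
  haveI : IsGalois K ↥N := ⟨⟩
  -- the embedding of `L` with range `L'`
  let f : ↥L →ₐ[K] Kbar := L'.val.comp e.symm.toAlgHom
  have hfval : ∀ y : ↥L, f y = ↑(e.symm y) := fun y => rfl
  -- the copy of `F` inside `N`
  let F' : IntermediateField K ↥N := IntermediateField.restrict hFN
  let T : Subgroup (↥N ≃ₐ[K] ↥N) := F'.fixingSubgroup
  haveI : FiniteDimensional (↥F') ↥N := FiniteDimensional.right K (↥F') ↥N
  -- the index of `T` is 2
  have h5 : Module.finrank K ↥F' = 2 := by
    rw [← hF2]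
    exact ((IntermediateField.restrict_algEquiv hFN).toLinearEquiv.finrank_eq).symm
  have hT2 : T.index = 2 := by
    have h1 : Module.finrank ↥(IntermediateField.fixedField T) ↥N = Fintype.card T :=
      by rw [← Nat.card_eq_fintype_card]; exact IntermediateField.finrank_fixedField_eq_card T
    rw [show IntermediateField.fixedField T = F' from IsGalois.fixedField_fixingSubgroup F'] at h1
    have h2 : T.index * Nat.card ↥T = Nat.card (↥N ≃ₐ[K] ↥N) := T.index_mul_card
    have h3 : Nat.card (↥N ≃ₐ[K] ↥N) = Module.finrank K ↥N := by
      rw [Nat.card_eq_fintype_card]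
      rw [← Nat.card_eq_fintype_card]; exact IsGalois.card_aut_eq_finrank K ↥N
    have h4 : Module.finrank K ↥F' * Module.finrank ↥F' ↥N = Module.finrank K ↥N :=
      Module.finrank_mul_finrank K ↥F' ↥N
    have hpos : 0 < Module.finrank ↥F' ↥N := Module.finrank_pos
    apply Nat.eq_of_mul_eq_mul_right hpos
    rw [Nat.card_eq_fintype_card, ← h1, h3, ← h4, h5] at h2
    exact h2
  haveI hTnorm : T.Normal := normal_of_index_two' hT2
  -- an automorphism of `Kbar` carrying `L` onto `L'`
  let σ₀ : Kbar →ₐ[K] Kbar := f.liftNormal Kbar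
  let σ : Kbar ≃ₐ[K] Kbar :=
    AlgEquiv.ofBijective σ₀ (Algebra.IsAlgebraic.algHom_bijective σ₀)
  have hσf : ∀ y : ↥L, σ ↑y = f y := by
    intro y
    show σ₀ ((algebraMap (↥L) Kbar) y) = f y
    rw [AlgHom.liftNormal_commutes]
    rfl
  let g : ↥N ≃ₐ[K] ↥N := AlgEquiv.restrictNormalHom (F := K) (K₁ := Kbar) ↥N σ
  -- conjugates by `g` of elements of `H = Gal(N/L)` lie in `T`
  have key : ∀ h ∈ (IntermediateField.comap N.val L).fixingSubgroup, g * h * g⁻¹ ∈ T := by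
    intro h hh
    rw [IntermediateField.mem_fixingSubgroup_iff]
    intro x hx
    have hxF : (↑x : Kbar) ∈ F := (IntermediateField.mem_restrict hFN x).1 hx
    have hxL' : (↑x : Kbar) ∈ L' := hFL' hxF
    have hσy : σ ↑(e ⟨↑x, hxL'⟩) = ↑x := by
      rw [hσf (e ⟨↑x, hxL'⟩), hfval, AlgEquiv.symm_apply_apply]
    have hginv : (↑(g⁻¹ x) : Kbar) = σ⁻¹ ↑x := by
      show ↑((AlgEquiv.restrictNormalHom (F := K) (K₁ := Kbar) ↥N σ)⁻¹ x) = σ⁻¹ ↑x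
      rw [← map_inv]
      exact AlgEquiv.restrictNormalHom_apply N σ⁻¹ x
    have hgx : g⁻¹ x ∈ IntermediateField.comap N.val L := by
      show N.val (g⁻¹ x) ∈ L
      show (↑(g⁻¹ x) : Kbar) ∈ L
      rw [hginv, ← hσy]
      show (σ.symm (σ ↑(e ⟨↑x, hxL'⟩)) : Kbar) ∈ L
      rw [AlgEquiv.symm_apply_apply]
      exact (e ⟨↑x, hxL'⟩).2
    have hfix : h (g⁻¹ x) = g⁻¹ x :=
      (IntermediateField.mem_fixingSubgroup_iff _ h).1 hh (g⁻¹ x) hgx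
    calc (g * h * g⁻¹) x = g (h (g⁻¹ x)) := by rw [AlgEquiv.mul_apply, AlgEquiv.mul_apply]
      _ = g (g⁻¹ x) := by rw [hfix]
      _ = x := g.apply_symm_apply x
  have hHT : (IntermediateField.comap N.val L).fixingSubgroup ≤ T := by
    intro h hh
    have h1 := key h hh
    have h2 := hTnorm.conj_mem _ h1 g⁻¹
    have h3 : g⁻¹ * (g * h * g⁻¹) * g⁻¹⁻¹ = h := by group
    rwa [h3] at h2
  have hCl : Subgroup.normalClosure
      (((IntermediateField.comap N.val L).fixingSubgroup : Subgroup (↥N ≃ₐ[K] ↥N)) :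
        Set (↥N ≃ₐ[K] ↥N)) ≤ T :=
    Subgroup.normalClosure_le_normal hHT
  rw [hT] at hCl
  have hTtop : T = ⊤ := top_le_iff.mp hCl
  rw [hTtop, Subgroup.index_top] at hT2
  exact absurd hT2 (by norm_num)

/-- over a number field `K` there are no finite extensions `L/K`, `M/K` inside
`K̄` with `[L:K] = 4`, `t_K(L) = 1` and `τ_K(M,L) = 2`. -/
theorem statement12 {K Kbar : Type*} [Field K] [NumberField K] [Field Kbar] [Algebra K Kbar]
    [IsAlgClosure K Kbar] :
    ¬ ∃ L M : IntermediateField K Kbar, FiniteDimensional K ↥L ∧ FiniteDimensional K ↥M ∧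
      Module.finrank K ↥L = 4 ∧ ascIndex K L = 1 ∧ interIndicium K M L = 2 := by
  rintro ⟨L, M, hFL, hFM, hL4, ht, hτ⟩
  classical
  rw [interIndicium] at hτ
  split_ifs at hτ with hne
  obtain ⟨L', hL'M, ⟨e⟩⟩ := hne
  have hFle : sInf {L' : IntermediateField K Kbar | L' ≤ M ∧ Nonempty (↥L' ≃ₐ[K] ↥L)} ≤ L' :=
    sInf_le ⟨hL'M, ⟨e⟩⟩
  have hL'N : L' ≤ galClosure K L := by
    intro x hx
    have hx' : x = (L'.val.comp e.symm.toAlgHom) (e ⟨x, hx⟩) := by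
      show x = ↑(e.symm (e ⟨x, hx⟩))
      rw [AlgEquiv.symm_apply_apply]
    rw [hx']
    exact (L'.val.comp e.symm.toAlgHom).fieldRange_le_normalClosure ⟨e ⟨x, hx⟩, rfl⟩
  have hLN : L ≤ galClosure K L := IntermediateField.le_normalClosure L
  have hFN : sInf {L' : IntermediateField K Kbar | L' ≤ M ∧ Nonempty (↥L' ≃ₐ[K] ↥L)}
      ≤ galClosure K L := hFle.trans hL'N
  haveI : FiniteDimensional K ↥(galClosure K L) := by
    unfold galClosure; infer_instance
  haveI hNorm : Normal K ↥(galClosure K L) := by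
    unfold galClosure; infer_instance
  exact aux_statement12 e hLN hFle hFN hτ (Subgroup.index_eq_one.mp ht)
end

section
/- Suppose M/K is obtained by strong cluster magnification from L/K through F/K, and let S = {L₁, …, L_s} be the set of all s = s_K(L) distinct subfields of K̄ that are K-isomorphic to L (so the distinct subfields of K̄ that are K-isomorphic to M are exactly L₁F, …, L_sF). Then a subset B = {L_{i₁}, …, L_{i_m}} ⊆ S is a minimal generating set of the Galois closure of L/K if and only if B' = {L_{i₁}F, …, L_{i_m}F} is a minimal generating set of the Galois closure of M/K; in this case |B| = |B'|. -/
open IntermediateField Polynomial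
open scoped Classical

section AuxGrp
variable {K T : Type*} [Field K] [Field T] [Algebra K T]

private theorem fixSup' (X Y : IntermediateField K T) :
    fixingSubgroup (X ⊔ Y) = fixingSubgroup X ⊓ fixingSubgroup Y := by
  refine le_antisymm (le_inf ?_ ?_) ?_
  · exact fun σ hσ => (mem_fixingSubgroup_iff _ σ).2 fun x hx =>
      (mem_fixingSubgroup_iff _ σ).1 hσ x (le_sup_left (α := IntermediateField K T) hx)
  · exact fun σ hσ => (mem_fixingSubgroup_iff _ σ).2 fun x hx =>
      (mem_fixingSubgroup_iff _ σ).1 hσ x (le_sup_right (α := IntermediateField K T) hx)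
  · rw [← IntermediateField.le_iff_le]
    exact sup_le ((IntermediateField.le_iff_le _ _).2 inf_le_left)
      ((IntermediateField.le_iff_le _ _).2 inf_le_right)

private theorem fixedFieldSup' (H N : Subgroup (T ≃ₐ[K] T)) :
    IntermediateField.fixedField (H ⊔ N) =
      IntermediateField.fixedField H ⊓ IntermediateField.fixedField N := by
  refine le_antisymm (le_inf ?_ ?_) ?_
  · exact (IntermediateField.le_iff_le _ _).2
      (le_sup_left.trans ((IntermediateField.le_iff_le _ _).1 le_rfl))
  · exact (IntermediateField.le_iff_le _ _).2
      (le_sup_right.trans ((IntermediateField.le_iff_le _ _).1 le_rfl))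
  · rw [IntermediateField.le_iff_le]
    exact sup_le ((IntermediateField.le_iff_le _ _).1 inf_le_left)
      ((IntermediateField.le_iff_le _ _).1 inf_le_right)

open scoped Pointwise in
private theorem inner_key' [FiniteDimensional K T] [IsGalois K T]
    (Lt' F' X : IntermediateField K T) [hnorm : (fixingSubgroup F').Normal]
    (hd : Lt' ⊓ F' = ⊥) (hX : X ≤ Lt') : (X ⊔ F') ⊓ Lt' = X := by
  refine le_antisymm ?_ (le_inf (le_trans le_sup_left le_rfl) hX)
  intro x hx
  obtain ⟨hx1, hx2⟩ := IntermediateField.mem_inf.1 hx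
  have htop : fixingSubgroup Lt' ⊔ fixingSubgroup F' = ⊤ := by
    have h1 : IntermediateField.fixedField (fixingSubgroup Lt' ⊔ fixingSubgroup F') = ⊥ := by
      rw [fixedFieldSup', IsGalois.fixedField_fixingSubgroup,
        IsGalois.fixedField_fixingSubgroup, hd]
    rw [← IntermediateField.fixingSubgroup_fixedField
      (fixingSubgroup Lt' ⊔ fixingSubgroup F'), h1, IntermediateField.fixingSubgroup_bot]
  rw [← IsGalois.fixedField_fixingSubgroup X]
  intro g
  obtain ⟨σ, hσ⟩ := g
  show σ • x = x
  rw [AlgEquiv.smul_def]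
  have hmem : (σ : T ≃ₐ[K] T) ∈
      ((fixingSubgroup Lt' : Set (T ≃ₐ[K] T)) * (fixingSubgroup F' : Set (T ≃ₐ[K] T))) := by
    rw [← Subgroup.mul_normal, htop]; trivial
  obtain ⟨h, hh, n, hn, hsn⟩ := hmem
  have hXfix : fixingSubgroup Lt' ≤ fixingSubgroup X := fun τ hτ =>
    (mem_fixingSubgroup_iff _ τ).2 fun y hy => (mem_fixingSubgroup_iff _ τ).1 hτ y (hX hy)
  have hnX : n ∈ fixingSubgroup X := by
    have : n = h⁻¹ * σ := by rw [← hsn]; group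
    rw [this]
    exact mul_mem (inv_mem (hXfix hh)) hσ
  have hnfix : n ∈ fixingSubgroup (X ⊔ F') := by
    rw [fixSup']; exact ⟨hnX, hn⟩
  have e1 : n x = x := (mem_fixingSubgroup_iff _ n).1 hnfix x hx1
  have : σ x = x := by
    rw [← hsn]
    show h (n x) = x
    rw [e1]
    exact (mem_fixingSubgroup_iff _ h).1 hh x hx2
  exact this

end AuxGrp

section AuxField
variable {K Kbar : Type*} [Field K] [Field Kbar] [Algebra K Kbar]

private theorem outer_key' (Lt F : IntermediateField K Kbar)
    [FiniteDimensional K ↥Lt] [FiniteDimensional K ↥F]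
    [IsGalois K ↥Lt] [IsGalois K ↥F]
    (hd : Lt ⊓ F = ⊥) (E : IntermediateField K Kbar) (hE : E ≤ Lt) :
    (E ⊔ F) ⊓ Lt = E := by
  set T : IntermediateField K Kbar := Lt ⊔ F with hT
  haveI : FiniteDimensional K ↥T := inferInstance
  haveI : IsGalois K ↥T := inferInstance
  set ι := T.val with hι
  have hLtT : Lt ≤ T := le_sup_left
  have hFT : F ≤ T := le_sup_right
  have hET : E ≤ T := hE.trans hLtT
  have hrange : ι.fieldRange = T := IntermediateField.fieldRange_val T
  have mc : ∀ X : IntermediateField K Kbar, X ≤ T → (IntermediateField.comap ι X).map ι = X :=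
    fun X hX => IntermediateField.map_comap_eq_self (by rw [hrange]; exact hX)
  set Lt' := IntermediateField.comap ι Lt with hLt'
  set F' := IntermediateField.comap ι F with hF'
  set E' := IntermediateField.comap ι E with hE'def
  have minj : Function.Injective (IntermediateField.map ι) := fun X Y h => by
    rw [← IntermediateField.comap_map ι X, h, IntermediateField.comap_map]
  haveI : IsGalois K ↥F' := IsGalois.of_algEquiv (((IntermediateField.equivMap F' ι).trans
      (IntermediateField.equivOfEq (mc F hFT))).symm)
  have hd' : Lt' ⊓ F' = ⊥ := minj (by
    rw [IntermediateField.map_inf, mc Lt hLtT, mc F hFT, hd, IntermediateField.map_bot])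
  have hE'le : E' ≤ Lt' := fun x hx => hE hx
  have key := inner_key' Lt' F' E' hd' hE'le
  have h2 := congrArg (IntermediateField.map ι) key
  rwa [IntermediateField.map_inf, IntermediateField.map_sup, mc Lt hLtT, mc F hFT,
    mc E hET] at h2

private theorem le_galClosure_of_iso (L L' : IntermediateField K Kbar)
    (h : Nonempty (↥L' ≃ₐ[K] ↥L)) : L' ≤ galClosure K L := by
  obtain ⟨f⟩ := h
  intro x hx
  have hmem : x ∈ (L'.val.comp f.symm.toAlgHom).fieldRange := ⟨f ⟨x, hx⟩, by simp⟩
  exact AlgHom.fieldRange_le_normalClosure _ hmem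

private theorem isoSup' (L L' F : IntermediateField K Kbar) [Normal K Kbar] [Normal K ↥F]
    (h : Nonempty (↥L' ≃ₐ[K] ↥L)) : Nonempty (↥(L' ⊔ F) ≃ₐ[K] ↥(L ⊔ F)) := by
  obtain ⟨f⟩ := h
  set τ := f.liftNormal Kbar with hτ
  have hmap : IntermediateField.map (τ : Kbar →ₐ[K] Kbar) L' = L := by
    apply le_antisymm
    · rintro y ⟨x, hx, rfl⟩
      have h1 : τ ((algebraMap (↥L') Kbar) ⟨x, hx⟩) = algebraMap (↥L) Kbar (f ⟨x, hx⟩) :=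
        f.liftNormal_commutes Kbar ⟨x, hx⟩
      have h2 : τ x = ((f ⟨x, hx⟩ : ↥L) : Kbar) := h1
      show τ x ∈ L
      rw [h2]
      exact (f ⟨x, hx⟩).2
    · intro y hy
      refine ⟨((f.symm ⟨y, hy⟩ : ↥L') : Kbar), (f.symm ⟨y, hy⟩).2, ?_⟩
      have h1 : τ ((algebraMap (↥L') Kbar) (f.symm ⟨y, hy⟩)) =
          algebraMap (↥L) Kbar (f (f.symm ⟨y, hy⟩)) := f.liftNormal_commutes Kbar _
      simpa using h1
  have hmapF : IntermediateField.map (τ : Kbar →ₐ[K] Kbar) F = F :=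
    (IntermediateField.normal_iff_forall_map_eq'.1 ‹Normal K ↥F›) τ
  refine ⟨(IntermediateField.equivMap (L' ⊔ F) ((τ : Kbar →ₐ[K] Kbar))).trans
    (IntermediateField.equivOfEq ?_)⟩
  rw [IntermediateField.map_sup, hmap, hmapF]

private theorem sSup_image_sup' (F : IntermediateField K Kbar)
    {A : Set (IntermediateField K Kbar)} (hA : A.Nonempty) :
    sSup ((· ⊔ F) '' A) = sSup A ⊔ F := by
  apply le_antisymm
  · refine sSup_le ?_
    rintro y ⟨x, hx, rfl⟩
    exact sup_le_sup_right (le_sSup hx) F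
  · obtain ⟨x, hx⟩ := hA
    refine sup_le (sSup_le fun z hz => le_trans le_sup_left (le_sSup ⟨z, hz, rfl⟩)) ?_
    exact le_trans le_sup_right (le_sSup ⟨x, hx, rfl⟩)

end AuxField
/-- if `M = LF` is obtained by strong cluster magnification from `L/K` through
`F/K`, then a set `B` of subfields `K`-isomorphic to `L` is a minimal generating set of the
Galois closure of `L/K` iff `B' = {L'F : L' ∈ B}` is a minimal generating set of the Galois
closure of `M/K`; in this case `|B| = |B'|`. -/
theorem statement15 {K Kbar : Type*} [Field K] [PerfectField K] [Field Kbar] [Algebra K Kbar]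
    [IsAlgClosure K Kbar] (L F : IntermediateField K Kbar)
    [FiniteDimensional K ↥L] [FiniteDimensional K ↥F] [IsGalois K ↥F]
    (hL : 2 < Module.finrank K ↥L) (hdisj : galClosure K L ⊓ F = ⊥)
    (B : Set (IntermediateField K Kbar))
    (hB : ∀ L' ∈ B, Nonempty (↥L' ≃ₐ[K] ↥L)) :
    (IsMinGenSet K L B ↔ IsMinGenSet K (L ⊔ F) ((· ⊔ F) '' B)) ∧
    (IsMinGenSet K L B → ((· ⊔ F) '' B).ncard = B.ncard) := by
  classical
  haveI := IsAlgClosure.isAlgebraic (R := K) (K := Kbar)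
  haveI : IsGalois K Kbar := ⟨⟩
  set Lt := galClosure K L with hLtdef
  haveI : FiniteDimensional K ↥Lt := normalClosure.is_finiteDimensional K (↥L) Kbar
  haveI : IsGalois K ↥Lt := IsGalois.normalClosure K (↥L) Kbar
  have hLle : L ≤ Lt := le_normalClosure L
  have key : ∀ E : IntermediateField K Kbar, E ≤ Lt → (E ⊔ F) ⊓ Lt = E :=
    fun E hE => outer_key' Lt F hdisj E hE
  have keyEq : ∀ E : IntermediateField K Kbar, E ≤ Lt → E ⊔ F = Lt ⊔ F → E = Lt := by
    intro E hE h
    have h1 := key E hE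
    rw [h, inf_eq_right.2 (le_sup_left : Lt ≤ Lt ⊔ F)] at h1
    exact h1.symm
  have injOn : ∀ E₁ : IntermediateField K Kbar, E₁ ≤ Lt → ∀ E₂ : IntermediateField K Kbar,
      E₂ ≤ Lt → E₁ ⊔ F = E₂ ⊔ F → E₁ = E₂ := fun E₁ h1 E₂ h2 h => by
    rw [← key E₁ h1, h, key E₂ h2]
  have hgc : galClosure K (L ⊔ F) = Lt ⊔ F := by
    refine le_antisymm ?_ (sup_le (normalClosure_mono _ _ le_sup_left)
      (le_sup_right.trans (le_normalClosure (L ⊔ F))))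
    exact normalClosure_le_iff_of_normal.2 (sup_le_sup_right hLle F)
  have hBle : ∀ L' ∈ B, L' ≤ Lt := fun L' h => le_galClosure_of_iso L L' (hB L' h)
  have hLbot : ∀ X : IntermediateField K Kbar, L ≤ X → ¬((⊥ : IntermediateField K Kbar) = X) := by
    intro X hX h
    have hLb : L = ⊥ := le_bot_iff.1 (h ▸ hX)
    rw [hLb] at hL
    rw [IntermediateField.finrank_bot] at hL
    omega
  have hInj : Set.InjOn (· ⊔ F) B := fun a ha b hb h =>
    injOn a (hBle a ha) b (hBle b hb) h
  refine ⟨⟨?_, ?_⟩, fun _ => Set.ncard_image_of_injOn hInj⟩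
  · rintro ⟨h1, h2, h3⟩
    refine ⟨?_, ?_, ?_⟩
    · rintro M' ⟨L', hL', rfl⟩
      exact isoSup' L L' F (hB L' hL')
    · rcases Set.eq_empty_or_nonempty B with rfl | hne
      · rw [sSup_empty] at h2
        exact absurd h2 (hLbot Lt hLle)
      · rw [sSup_image_sup' F hne, h2, hgc]
    · intro A' hA' hcon
      set A := {x ∈ B | x ⊔ F ∈ A'} with hA
      have hAB : A ⊆ B := fun x hx => hx.1
      have himg : (· ⊔ F) '' A = A' := by
        apply subset_antisymm
        · rintro y ⟨x, hx, rfl⟩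
          exact hx.2
        · intro y hy
          obtain ⟨x, hxB, rfl⟩ := hA'.1 hy
          exact ⟨x, ⟨hxB, hy⟩, rfl⟩
      have hAne : A ≠ B := fun hEq => hA'.2 (by rw [← himg, ← hEq])
      have hAne' := h3 A (ssubset_of_subset_of_ne hAB hAne)
      rw [hgc] at hcon
      rcases Set.eq_empty_or_nonempty A with hAe | hAne2
      · rw [hAe] at himg
        rw [← himg, Set.image_empty, sSup_empty] at hcon
        exact hLbot (Lt ⊔ F) (hLle.trans le_sup_left) hcon
      · rw [← himg, sSup_image_sup' F hAne2] at hcon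
        exact hAne' (keyEq (sSup A) (sSup_le fun x hx => hBle x (hAB hx)) hcon)
  · rintro ⟨h1, h2, h3⟩
    have hBne : B.Nonempty := by
      rcases Set.eq_empty_or_nonempty B with rfl | h
      · rw [Set.image_empty, sSup_empty, hgc] at h2
        exact absurd h2 (hLbot (Lt ⊔ F) (hLle.trans le_sup_left))
      · exact h
    have hsupB : sSup B = Lt := by
      rw [sSup_image_sup' F hBne, hgc] at h2
      exact keyEq (sSup B) (sSup_le hBle) h2
    refine ⟨hB, hsupB, ?_⟩
    intro A hAss hcon
    have hA'ss : (· ⊔ F) '' A ⊂ (· ⊔ F) '' B := by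
      refine ⟨Set.image_mono hAss.1, fun hle => ?_⟩
      refine hAss.2 fun b hb => ?_
      obtain ⟨a, haA, h⟩ := hle ⟨b, hb, rfl⟩
      rwa [injOn a (hBle a (hAss.1 haA)) b (hBle b hb) h] at haA
    refine h3 _ hA'ss ?_
    have hAne2 : A.Nonempty := by
      rcases Set.eq_empty_or_nonempty A with rfl | h
      · rw [sSup_empty] at hcon
        exact (hLbot Lt hLle hcon).elim
      · exact h
    rw [sSup_image_sup' F hAne2, hcon, hgc]
end
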